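/- Let f = ∑_{n∈ℕ} 2^{-n} e_{n+1} and g = ∑_{n∈ℕ} 2^{-n} e_n in ℓᵖ(ℕ). Then for every convex φ : (a,b) → [0,∞) with the ranges of f and g contained in (a,b), ∑_n φ(f(n)) = ∑_n φ(g(n)) (possibly both +∞), yet f is not majorized by g and g is not majorized by f. -/

import Mathlib

/-!
Since `f` is `g` with a `0` prepended and `g n → 0`, a convex (hence continuous) `φ` with
`∑ φ (g n) < ∞` has `φ 0 = 0`, so the two sums agree.

Write `D_{ij} = (D e_j) i`. Every row of a doubly stochastic `D` has a positive entry, so `D g > 0`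
and `f = D g` fails at `f 0 = 0`. If `g = D f`, induction on `n` shows that row `n` of `D` is
concentrated on column `n + 1`: the columns `1, …, n` are used up by the rows above, and
`g n = 2^{-(n+1)}` is the largest remaining value of `f`, which a convex combination can only
attain by putting all its weight on it. Hence column `0` of `D` vanishes, contradicting its
column sum `1`.
-/
open scoped ENNReal

/-- The standard basis element `e i` of `ℓᵖ(I)`. -/
noncomputable def stdb (p : ℝ≥0∞) {I : Type*} (i : I) : lp (fun _ : I => ℝ) p :=
  letI := Classical.decEq I
  lp.single p i 1

/-- A bounded linear operator `A : ℓᵖ(J) → ℓᵖ(I)` is positive if `A f ≥ 0` whenever `f ≥ 0`. -/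
def IsPositiveOp {I J : Type*} {p : ℝ≥0∞} [Fact (1 ≤ p)]
    (A : lp (fun _ : J => ℝ) p →L[ℝ] lp (fun _ : I => ℝ) p) : Prop :=
  ∀ f : lp (fun _ : J => ℝ) p, (∀ j, 0 ≤ f j) → ∀ i, 0 ≤ A f i

/-- Row stochastic: positive and each row sum `∑_j ⟨A e_j, e_i⟩` equals 1. -/
def IsRowStochastic {I J : Type*} {p : ℝ≥0∞} [Fact (1 ≤ p)]
    (A : lp (fun _ : J => ℝ) p →L[ℝ] lp (fun _ : I => ℝ) p) : Prop :=
  IsPositiveOp A ∧ ∀ i : I, HasSum (fun j : J => A (stdb p j) i) 1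

/-- Column stochastic: positive and each column sum `∑_i ⟨A e_j, e_i⟩` equals 1. -/
def IsColumnStochastic {I J : Type*} {p : ℝ≥0∞} [Fact (1 ≤ p)]
    (A : lp (fun _ : J => ℝ) p →L[ℝ] lp (fun _ : I => ℝ) p) : Prop :=
  IsPositiveOp A ∧ ∀ j : J, HasSum (fun i : I => A (stdb p j) i) 1

/-- Doubly stochastic: both row and column stochastic. -/
def IsDoublyStochastic {I J : Type*} {p : ℝ≥0∞} [Fact (1 ≤ p)]
    (A : lp (fun _ : J => ℝ) p →L[ℝ] lp (fun _ : I => ℝ) p) : Prop :=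
  IsRowStochastic A ∧ IsColumnStochastic A

/-- `f ≺ g` : `f` is majorized by `g`, i.e. `f = D g` for some doubly stochastic `D`. -/
def Majorized {I : Type*} {p : ℝ≥0∞} [Fact (1 ≤ p)]
    (f g : lp (fun _ : I => ℝ) p) : Prop :=
  ∃ D : lp (fun _ : I => ℝ) p →L[ℝ] lp (fun _ : I => ℝ) p,
    IsDoublyStochastic D ∧ f = D g

/-- `T` preserves majorization if `f ≺ g` implies `T f ≺ T g`. -/
def PreservesMajorization {I : Type*} {p : ℝ≥0∞} [Fact (1 ≤ p)]
    (T : lp (fun _ : I => ℝ) p →L[ℝ] lp (fun _ : I => ℝ) p) : Prop :=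
  ∀ f g : lp (fun _ : I => ℝ) p, Majorized f g → Majorized (T f) (T g)

open scoped Topology
open Filter

section StochasticOperators

variable {I J : Type*} {p : ℝ≥0∞}

theorem smul_stdb [DecidableEq J] (j : J) (c : ℝ) : c • stdb p j = lp.single p j c := by
  ext k
  simp [stdb, lp.single_apply, Pi.single_apply]

theorem stdb_nonneg (j k : J) : 0 ≤ stdb p j k := by
  classical
  rw [stdb, lp.single_apply, Pi.single_apply]
  split <;> norm_num

variable [Fact (1 ≤ p)]

/-- `D (stdb p j) i` is the matrix entry `D_{ij}`. -/
theorem hasSum_mul_apply_stdb (hp : p ≠ ∞) (D : lp (fun _ : J => ℝ) p →L[ℝ] lp (fun _ : I => ℝ) p)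
    (x : lp (fun _ : J => ℝ) p) (i : I) :
    HasSum (fun j => x j * D (stdb p j) i) (D x i) := by
  classical
  have := ((lp.evalCLM ℝ (fun _ : I => ℝ) p i).comp D).hasSum (lp.hasSum_single hp x)
  simp only [ContinuousLinearMap.comp_apply, ← smul_stdb, map_smul, smul_eq_mul] at this
  exact this

variable {D : lp (fun _ : J => ℝ) p →L[ℝ] lp (fun _ : I => ℝ) p}

theorem IsPositiveOp.apply_stdb_nonneg (hD : IsPositiveOp D) (i : I) (j : J) :
    0 ≤ D (stdb p j) i :=
  hD _ (stdb_nonneg j) i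

theorem IsRowStochastic.exists_apply_stdb_pos (hD : IsRowStochastic D) (i : I) :
    ∃ j, 0 < D (stdb p j) i := by
  by_contra! h
  have hzero : (fun j => D (stdb p j) i) = 0 :=
    funext fun j => (h j).antisymm (hD.1.apply_stdb_nonneg i j)
  exact one_ne_zero ((hD.2 i).unique (hzero ▸ hasSum_zero))

theorem IsColumnStochastic.exists_apply_stdb_pos (hD : IsColumnStochastic D) (j : J) :
    ∃ i, 0 < D (stdb p j) i := by
  by_contra! h
  have hzero : (fun i => D (stdb p j) i) = 0 :=
    funext fun i => (h i).antisymm (hD.1.apply_stdb_nonneg i j)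
  exact one_ne_zero ((hD.2 j).unique (hzero ▸ hasSum_zero))

theorem IsRowStochastic.apply_pos (hp : p ≠ ∞) (hD : IsRowStochastic D)
    {x : lp (fun _ : J => ℝ) p} (hx : ∀ j, 0 < x j) (i : I) : 0 < D x i := by
  obtain ⟨j, hj⟩ := hD.exists_apply_stdb_pos i
  calc 0 < x j * D (stdb p j) i := mul_pos (hx j) hj
    _ ≤ D x i := le_hasSum (hasSum_mul_apply_stdb hp D x i) j fun k _ =>
      mul_nonneg (hx k).le (hD.1.apply_stdb_nonneg i k)

theorem IsRowStochastic.apply_stdb_eq_one (hD : IsRowStochastic D) {i : I} {j : J}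
    (h : ∀ k, k ≠ j → D (stdb p k) i = 0) : D (stdb p j) i = 1 :=
  (hasSum_single j h).unique (hD.2 i)

theorem IsColumnStochastic.apply_stdb_eq_zero_of_eq_one (hD : IsColumnStochastic D) {i i' : I}
    {j : J} (h : D (stdb p j) i = 1) (hi : i' ≠ i) : D (stdb p j) i' = 0 := by
  classical
  have := sum_le_hasSum {i, i'} (fun k _ => hD.1.apply_stdb_nonneg k j) (hD.2 j)
  rw [Finset.sum_pair hi.symm, h] at this
  linarith [hD.1.apply_stdb_nonneg i' j]

/-- A convex combination of values that attains an upper bound of them gives no weight to a value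
strictly below that bound. -/
theorem IsRowStochastic.apply_stdb_eq_zero_of_lt (hp : p ≠ ∞) (hD : IsRowStochastic D)
    {x : lp (fun _ : J => ℝ) p} {i : I} {j : J}
    (hle : ∀ k, D (stdb p k) i ≠ 0 → x k ≤ D x i) (hlt : x j < D x i) : D (stdb p j) i = 0 := by
  by_contra hj
  have hterm : ∀ k, x k * D (stdb p k) i ≤ D x i * D (stdb p k) i := fun k => by
    by_cases hk : D (stdb p k) i = 0
    · simp [hk]
    · exact mul_le_mul_of_nonneg_right (hle k hk) (hD.1.apply_stdb_nonneg i k)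
  have hpos : 0 < D (stdb p j) i := (hD.1.apply_stdb_nonneg i j).lt_of_ne' hj
  have hsum : HasSum (fun k => D x i * D (stdb p k) i) (D x i) := by
    simpa using (hD.2 i).mul_left (D x i)
  exact lt_irrefl _ <| hasSum_lt hterm (mul_lt_mul_of_pos_right hlt hpos)
    (hasSum_mul_apply_stdb hp D x i) hsum

end StochasticOperators

theorem not_majorized_of_apply_eq_zero {I : Type*} {p : ℝ≥0∞} [Fact (1 ≤ p)] (hp : p ≠ ∞)
    {x y : lp (fun _ : I => ℝ) p} {i : I} (hx : x i = 0) (hy : ∀ j, 0 < y j) :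
    ¬ Majorized x y := by
  rintro ⟨D, ⟨hrow, -⟩, rfl⟩
  exact (hrow.apply_pos hp hy i).ne' hx

theorem ite_half_pow_le {n j : ℕ} (h : j = 0 ∨ n + 1 ≤ j) :
    (if j = 0 then 0 else ((1 : ℝ) / 2) ^ j) ≤ (1 / 2) ^ (n + 1) := by
  rcases h with rfl | h
  · simp only [if_true]; positivity
  · rw [if_neg (by omega)]
    exact pow_le_pow_of_le_one (by norm_num) (by norm_num) h

theorem ite_half_pow_lt {n j : ℕ} (h : j = 0 ∨ n + 1 < j) :
    (if j = 0 then 0 else ((1 : ℝ) / 2) ^ j) < (1 / 2) ^ (n + 1) := by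
  rcases h with rfl | h
  · simp only [if_true]; positivity
  · rw [if_neg (by omega)]
    exact pow_lt_pow_right_of_lt_one₀ (by norm_num) (by norm_num) h

theorem IsDoublyStochastic.apply_stdb_eq_zero_of_ne_succ {p : ℝ≥0∞} [Fact (1 ≤ p)] (hp : p ≠ ∞)
    {D : lp (fun _ : ℕ => ℝ) p →L[ℝ] lp (fun _ : ℕ => ℝ) p} (hD : IsDoublyStochastic D)
    {x : lp (fun _ : ℕ => ℝ) p} (hx : ∀ n, x n = if n = 0 then 0 else ((1 : ℝ) / 2) ^ n)
    (hDx : ∀ n, D x n = ((1 : ℝ) / 2) ^ (n + 1)) (n j : ℕ) (hj : j ≠ n + 1) :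
    D (stdb p j) n = 0 := by
  induction n using Nat.strong_induction_on generalizing j with
  | _ n IH =>
    have hused : ∀ k, 1 ≤ k → k ≤ n → D (stdb p k) n = 0 := by
      intro k hk1 hkn
      obtain ⟨m, rfl⟩ := Nat.exists_eq_add_of_le' hk1
      have hm : D (stdb p (m + 1)) m = 1 :=
        hD.1.apply_stdb_eq_one fun k hk => IH m (by omega) k hk
      exact hD.2.apply_stdb_eq_zero_of_eq_one hm (by omega)
    by_cases hjn : 1 ≤ j ∧ j ≤ n
    · exact hused j hjn.1 hjn.2
    refine hD.1.apply_stdb_eq_zero_of_lt hp (x := x) (fun k hk => ?_) ?_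
    · rw [hDx, hx]
      exact ite_half_pow_le (by by_contra! h; exact hk (hused k (by omega) (by omega)))
    · rw [hDx, hx]
      exact ite_half_pow_lt (by omega)

theorem ENNReal.ofReal_eq_zero_of_tendsto_of_tsum_ne_top {v : ℕ → ℝ} {y : ℝ}
    (hv : Tendsto v atTop (𝓝 y)) (h : ∑' n, ENNReal.ofReal (v n) ≠ ∞) : ENNReal.ofReal y = 0 :=
  tendsto_nhds_unique ((ENNReal.continuous_ofReal.tendsto y).comp hv)
    (ENNReal.tendsto_atTop_zero_of_tsum_ne_top h)

/-- If the sum is finite, then `φ (u 0) ≤ 0` by continuity, so the prepended term vanishes. -/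
theorem tsum_ofReal_comp_succ_eq {φ : ℝ → ℝ} {u v : ℕ → ℝ} (hφ : ContinuousAt φ (u 0))
    (hv : Tendsto v atTop (𝓝 (u 0))) (huv : ∀ n, u (n + 1) = v n) :
    ∑' n, ENNReal.ofReal (φ (u n)) = ∑' n, ENNReal.ofReal (φ (v n)) := by
  rw [tsum_eq_zero_add' ENNReal.summable]
  simp only [huv]
  by_cases h : ∑' n, ENNReal.ofReal (φ (v n)) = ∞
  · rw [h, add_top]
  · rw [ENNReal.ofReal_eq_zero_of_tendsto_of_tsum_ne_top (hφ.tendsto.comp hv) h, zero_add]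

/-- For `f = ∑_n 2^{-n} e_{n+1}` and `g = ∑_n 2^{-n} e_n` in `ℓᵖ(ℕ)` (indices shifted so that
`f 0 = 0`, `f (n+1) = g n = 2^{-(n+1)}`): all convex sums agree, yet `f ⊀ g` and `g ⊀ f`. -/
theorem stmt11 (p : ℝ≥0∞) [Fact (1 ≤ p)] (hp : p ≠ ∞)
    (f g : lp (fun _ : ℕ => ℝ) p)
    (hf : ∀ n : ℕ, f n = if n = 0 then 0 else ((1 : ℝ) / 2) ^ n)
    (hg : ∀ n : ℕ, g n = ((1 : ℝ) / 2) ^ (n + 1)) :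
    (∀ (a b : EReal), a < b → ∀ φ : ℝ → ℝ,
      ConvexOn ℝ {x : ℝ | a < (x : EReal) ∧ (x : EReal) < b} φ →
      (∀ x : ℝ, a < (x : EReal) → (x : EReal) < b → 0 ≤ φ x) →
      (∀ n, a < (f n : EReal) ∧ (f n : EReal) < b) →
      (∀ n, a < (g n : EReal) ∧ (g n : EReal) < b) →
      ∑' n : ℕ, ENNReal.ofReal (φ (f n)) = ∑' n : ℕ, ENNReal.ofReal (φ (g n))) ∧
    ¬ Majorized f g ∧ ¬ Majorized g f := by
  have hf0 : f 0 = 0 := by simp [hf]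
  refine ⟨fun a b _ φ hφ _ hfab _ => ?_, ?_, ?_⟩
  · have hopen : IsOpen {x : ℝ | a < (x : EReal) ∧ (x : EReal) < b} :=
      isOpen_Ioo.preimage continuous_coe_real_ereal
    have hφ0 : ContinuousAt φ (f 0) :=
      (hφ.continuousOn hopen).continuousAt (hopen.mem_nhds (hfab 0))
    have hg0 : Tendsto (fun n => g n) atTop (𝓝 (f 0)) := by
      simp only [hg, hf0]
      exact (tendsto_pow_atTop_nhds_zero_of_lt_one (by norm_num) (by norm_num)).comp
        (tendsto_add_atTop_nat 1)
    exact tsum_ofReal_comp_succ_eq hφ0 hg0 fun n => by simp [hf, hg]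
  · exact not_majorized_of_apply_eq_zero hp hf0 fun n => by rw [hg]; positivity
  · rintro ⟨D, hD, hgf⟩
    obtain ⟨i, hi⟩ := hD.2.exists_apply_stdb_pos 0
    exact hi.ne' <| hD.apply_stdb_eq_zero_of_ne_succ hp hf (fun n => by rw [← hgf, hg]) i 0
      (by omega)
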